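/- arXiv:1703.09485 — 2 statements merged into one kernel-verified Lean document; each statement's English description precedes it below -/
import Mathlib

section
/- Let 0 ≤ α < 1 and let f be starlike of order α on the unit disk, with Taylor expansion f(z) = z + Σ_{k≥2} a_k z^k. Then the Zalcman functional J_2(f) = a_2² - a_3 satisfies |J_2(f)| ≤ 1-α. -/
open Complex Metric
open Topology Filter

private lemma eqOn_deriv' {u v : ℂ → ℂ} (h : Set.EqOn u v (ball (0:ℂ) 1)) :
    Set.EqOn (deriv u) (deriv v) (ball (0:ℂ) 1) :=
  fun _ hz => (h.eventuallyEq_of_mem (isOpen_ball.mem_nhds hz)).deriv_eq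

private lemma analyticOnNhd_dslope' {u : ℂ → ℂ}
    (hu : AnalyticOnNhd ℂ u (ball (0:ℂ) 1)) (hu0 : u 0 = 0) :
    AnalyticOnNhd ℂ (dslope u 0) (ball (0:ℂ) 1) := by
  intro z hz
  rcases eq_or_ne z 0 with rfl | hne
  · obtain ⟨q, hq⟩ := hu 0 hz
    exact hq.has_fpower_series_dslope_fslope.analyticAt
  · have h1 : AnalyticAt ℂ (fun w => u w / w) z :=
      (hu z hz).div analyticAt_id hne
    apply h1.congr
    filter_upwards [isOpen_compl_singleton.mem_nhds (by simpa using hne :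
        z ∈ ({0}ᶜ : Set ℂ))] with w hw
    have hw0 : w ≠ 0 := by simpa using hw
    rw [dslope_of_ne _ hw0, slope_def_field, hu0, sub_zero, sub_zero]

private lemma moebius_abs_le' {w b : ℂ} (hw : ‖w‖ ≤ 1) (hb : ‖b‖ < 1) :
    ‖(w - b) / (1 - (starRingEnd ℂ) b * w)‖ ≤ 1 := by
  have hw2 : w.re * w.re + w.im * w.im ≤ 1 := by
    have := Complex.sq_norm w
    rw [Complex.normSq_apply] at this
    nlinarith [norm_nonneg w]
  have hb2 : b.re * b.re + b.im * b.im < 1 := by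
    have := Complex.sq_norm b
    rw [Complex.normSq_apply] at this
    nlinarith [norm_nonneg b]
  have key : Complex.normSq (w - b) ≤ Complex.normSq (1 - (starRingEnd ℂ) b * w) := by
    simp only [Complex.normSq_apply, Complex.sub_re, Complex.sub_im, Complex.mul_re,
      Complex.mul_im, Complex.one_re, Complex.one_im, Complex.conj_re, Complex.conj_im]
    nlinarith [mul_nonneg (sub_nonneg.mpr hw2) (le_of_lt (sub_pos.mpr hb2))]
  have hvne : (1 : ℂ) - (starRingEnd ℂ) b * w ≠ 0 := by
    intro h
    have h1 : (starRingEnd ℂ) b * w = 1 := by linear_combination -h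
    have := congrArg (‖·‖) h1
    rw [norm_mul, Complex.norm_conj, norm_one] at this
    nlinarith [norm_nonneg b, norm_nonneg w]
  have hpos : 0 < ‖1 - (starRingEnd ℂ) b * w‖ :=
    norm_pos_iff.mpr hvne
  rw [norm_div, div_le_one hpos]
  have h1 : (‖w - b‖) ^ 2 ≤ (‖1 - (starRingEnd ℂ) b * w‖) ^ 2 := by
    rw [Complex.sq_norm, Complex.sq_norm]; exact key
  nlinarith [norm_nonneg (w - b)]

private lemma deriv_le_one' {h : ℂ → ℂ} (hd : DifferentiableOn ℂ h (ball (0:ℂ) 1))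
    (hb : ∀ z ∈ ball (0:ℂ) 1, ‖h z‖ ≤ 1) (h0 : h 0 = 0) :
    ‖deriv h 0‖ ≤ 1 := by
  have key : ∀ ε : ℝ, 0 < ε → ‖deriv h 0‖ ≤ 1 + ε := by
    intro ε hε
    have hmaps : Set.MapsTo h (ball (0:ℂ) 1) (ball (h 0) (1 + ε)) := by
      intro z hz
      rw [mem_ball, h0, dist_zero_right]
      calc ‖h z‖ ≤ 1 := hb z hz
        _ < 1 + ε := by linarith
    have := Complex.norm_dslope_le_div_of_mapsTo_ball hd (hmaps.mono_right ball_subset_closedBall) (mem_ball_self one_pos)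
    rw [dslope_same] at this
    simpa using this
  exact le_of_forall_pos_le_add key

set_option maxHeartbeats 2000000 in
/-- For `0 ≤ α < 1` and `f` starlike of order `α` on the unit disk, the Zalcman
functional `J₂(f) = a₂² - a₃` satisfies `|J₂(f)| ≤ 1-α`. -/
theorem zalcman_J2_starlike_order_alpha (α : ℝ) (hα0 : 0 ≤ α) (hα1 : α < 1)
    (f : ℂ → ℂ) (hf : AnalyticOn ℂ f (ball 0 1))
    (hf0 : f 0 = 0) (hf1 : deriv f 0 = 1)
    (hfne : ∀ z ∈ ball (0 : ℂ) 1, z ≠ 0 → f z ≠ 0)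
    (hst : ∀ z ∈ ball (0 : ℂ) 1, z ≠ 0 → α < (z * deriv f z / f z).re)
    (a : ℕ → ℂ) (ha : ∀ k, a k = iteratedDeriv k f 0 / (Nat.factorial k : ℂ)) :
    ‖(a 2) ^ 2 - a 3‖ ≤ 1 - α := by
  have hB : (0:ℂ) ∈ ball (0:ℂ) 1 := mem_ball_self one_pos
  have hfa : AnalyticOnNhd ℂ f (ball 0 1) :=
    (isOpen_ball.analyticOn_iff_analyticOnNhd).mp hf
  set g := dslope f 0 with hgdef
  have hga : AnalyticOnNhd ℂ g (ball (0:ℂ) 1) := analyticOnNhd_dslope' hfa hf0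
  have hg0 : g 0 = 1 := by rw [hgdef, dslope_same, hf1]
  have hzg : ∀ z ∈ ball (0:ℂ) 1, z * g z = f z := by
    intro z _
    have h := sub_smul_dslope f 0 z
    rw [sub_zero, hf0, sub_zero, smul_eq_mul] at h
    exact h
  have hgne : ∀ z ∈ ball (0:ℂ) 1, g z ≠ 0 := by
    intro z hz
    rcases eq_or_ne z 0 with rfl | hne
    · rw [hg0]; exact one_ne_zero
    · intro h
      exact hfne z hz hne (by rw [← hzg z hz, h, mul_zero])
  -- the function p = z f' / f, extended analytically at 0
  set p := fun z => deriv f z / g z with hpdef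
  have hpa : AnalyticOnNhd ℂ p (ball (0:ℂ) 1) :=
    fun z hz => ((hfa.deriv z hz).div (hga z hz) (hgne z hz))
  have hp0 : p 0 = 1 := by rw [hpdef]; simp [hf1, hg0]
  have hpre : ∀ z ∈ ball (0:ℂ) 1, α < (p z).re := by
    intro z hz
    rcases eq_or_ne z 0 with rfl | hne
    · rw [hp0]; simpa using hα1
    · have h1 : p z = z * deriv f z / f z := by
        rw [hpdef, ← hzg z hz]
        exact (mul_div_mul_left _ _ hne).symm
      rw [h1]; exact hst z hz hne
  set c : ℂ := 1 - 2*(α:ℂ) with hcdef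
  have hden : ∀ z ∈ ball (0:ℂ) 1, p z + c ≠ 0 := by
    intro z hz h
    have h1 : (p z + c).re = 0 := by rw [h]; simp
    have h2 : (p z).re + 1 - 2*α = 0 := by
      rw [Complex.add_re] at h1
      simp [hcdef] at h1
      linarith [h1]
    have := hpre z hz
    linarith
  set ω := fun z => (p z - 1) / (p z + c) with hwdef
  have hωa : AnalyticOnNhd ℂ ω (ball (0:ℂ) 1) :=
    fun z hz => (((hpa z hz).sub analyticAt_const).div
      ((hpa z hz).add analyticAt_const) (hden z hz))
  have hω0 : ω 0 = 0 := by rw [hwdef]; simp [hp0]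
  have hωlt : ∀ z ∈ ball (0:ℂ) 1, ‖ω z‖ < 1 := by
    intro z hz
    have hx := hpre z hz
    have hkey : Complex.normSq (p z - 1) < Complex.normSq (p z + c) := by
      simp only [Complex.normSq_apply, Complex.sub_re, Complex.sub_im, Complex.add_re,
        Complex.add_im, Complex.one_re, Complex.one_im, hcdef, Complex.mul_re, Complex.mul_im,
        Complex.ofReal_re, Complex.ofReal_im, Complex.re_ofNat, Complex.im_ofNat]
      nlinarith [hx, hα1]
    have h1 : (‖p z - 1‖)^2 < (‖p z + c‖)^2 := by
      rw [Complex.sq_norm, Complex.sq_norm]; exact hkey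
    have h2 : ‖p z - 1‖ < ‖p z + c‖ := by
      nlinarith [norm_nonneg (p z - 1), norm_nonneg (p z + c)]
    rw [hwdef]
    simp only [norm_div]
    rw [div_lt_one (lt_of_le_of_lt (norm_nonneg _) h2)]
    exact h2
  -- the identity p * (1 - ω) = 1 + c * ω
  have W0 : Set.EqOn (fun z => p z * (1 - ω z)) (fun z => 1 + c * ω z) (ball (0:ℂ) 1) := by
    intro z hz
    have hd := hden z hz
    simp only [hwdef]
    field_simp
    ring
  -- differentiability helpers
  have hdg : ∀ z ∈ ball (0:ℂ) 1, DifferentiableAt ℂ g z :=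
    fun z hz => (hga z hz).differentiableAt
  have hdg' : ∀ z ∈ ball (0:ℂ) 1, DifferentiableAt ℂ (deriv g) z :=
    fun z hz => (hga.deriv z hz).differentiableAt
  have hdg'' : ∀ z ∈ ball (0:ℂ) 1, DifferentiableAt ℂ (deriv (deriv g)) z :=
    fun z hz => (hga.deriv.deriv z hz).differentiableAt
  have hdp : ∀ z ∈ ball (0:ℂ) 1, DifferentiableAt ℂ p z :=
    fun z hz => (hpa z hz).differentiableAt
  have hdp' : ∀ z ∈ ball (0:ℂ) 1, DifferentiableAt ℂ (deriv p) z :=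
    fun z hz => (hpa.deriv z hz).differentiableAt
  have hdω : ∀ z ∈ ball (0:ℂ) 1, DifferentiableAt ℂ ω z :=
    fun z hz => (hωa z hz).differentiableAt
  have hdω' : ∀ z ∈ ball (0:ℂ) 1, DifferentiableAt ℂ (deriv ω) z :=
    fun z hz => (hωa.deriv z hz).differentiableAt
  -- Chain 1 : derivatives of g at 0
  have E0 : Set.EqOn (fun z => z * g z) f (ball (0:ℂ) 1) := fun z hz => hzg z hz
  have E1 : Set.EqOn (fun z => g z + z * deriv g z) (deriv f) (ball (0:ℂ) 1) := by
    intro z hz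
    rw [← eqOn_deriv' E0 hz]
    rw [deriv_fun_mul differentiableAt_fun_id (hdg z hz), deriv_id'']
    ring
  have E2 : Set.EqOn (fun z => 2 * deriv g z + z * deriv (deriv g) z)
      (deriv (deriv f)) (ball (0:ℂ) 1) := by
    intro z hz
    rw [← eqOn_deriv' E1 hz]
    rw [deriv_fun_add (hdg z hz) (differentiableAt_fun_id.fun_mul (hdg' z hz)),
      deriv_fun_mul differentiableAt_fun_id (hdg' z hz), deriv_id'']
    ring
  have E3 : Set.EqOn (fun z => 3 * deriv (deriv g) z + z * deriv (deriv (deriv g)) z)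
      (deriv (deriv (deriv f))) (ball (0:ℂ) 1) := by
    intro z hz
    rw [← eqOn_deriv' E2 hz]
    rw [deriv_fun_add ((hdg' z hz).const_mul 2) (differentiableAt_fun_id.fun_mul (hdg'' z hz)),
      deriv_const_mul 2 (hdg' z hz),
      deriv_fun_mul differentiableAt_fun_id (hdg'' z hz), deriv_id'']
    ring
  have hit2 : iteratedDeriv 2 f 0 = deriv (deriv f) 0 := by
    rw [iteratedDeriv_succ, iteratedDeriv_one]
  have hit3 : iteratedDeriv 3 f 0 = deriv (deriv (deriv f)) 0 := by
    rw [iteratedDeriv_succ, iteratedDeriv_succ, iteratedDeriv_one]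
  have ha2 : deriv (deriv f) 0 = 2 * a 2 := by
    rw [ha 2, ← hit2]
    norm_num [Nat.factorial]
    ring
  have ha3 : deriv (deriv (deriv f)) 0 = 6 * a 3 := by
    rw [ha 3, ← hit3]
    norm_num [Nat.factorial]
    ring
  have hg'0 : deriv g 0 = a 2 := by
    have h := E2 hB
    simp only [zero_mul, add_zero] at h
    rw [ha2] at h
    linear_combination h / 2
  have hg''0 : deriv (deriv g) 0 = 2 * a 3 := by
    have h := E3 hB
    simp only [zero_mul, add_zero] at h
    rw [ha3] at h
    linear_combination h / 3
  -- Chain 2 : derivatives of p at 0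
  have P0 : Set.EqOn (fun z => p z * g z) (deriv f) (ball (0:ℂ) 1) := by
    intro z hz
    exact div_mul_cancel₀ _ (hgne z hz)
  have P1 : Set.EqOn (fun z => deriv p z * g z + p z * deriv g z)
      (deriv (deriv f)) (ball (0:ℂ) 1) := by
    intro z hz
    rw [← eqOn_deriv' P0 hz, deriv_fun_mul (hdp z hz) (hdg z hz)]
  have P2 : Set.EqOn (fun z => (deriv (deriv p) z * g z + deriv p z * deriv g z) +
      (deriv p z * deriv g z + p z * deriv (deriv g) z))
      (deriv (deriv (deriv f))) (ball (0:ℂ) 1) := by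
    intro z hz
    rw [← eqOn_deriv' P1 hz,
      deriv_fun_add ((hdp' z hz).fun_mul (hdg z hz)) ((hdp z hz).fun_mul (hdg' z hz)),
      deriv_fun_mul (hdp' z hz) (hdg z hz), deriv_fun_mul (hdp z hz) (hdg' z hz)]
  have hp'0 : deriv p 0 = a 2 := by
    have h := P1 hB
    simp only [hg0, hp0, mul_one, one_mul, hg'0] at h
    rw [ha2] at h
    linear_combination h
  have hp''0 : deriv (deriv p) 0 = 4 * a 3 - 2 * (a 2)^2 := by
    have h := P2 hB
    simp only [hg0, hp0, mul_one, one_mul, hg'0, hg''0, hp'0] at h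
    rw [ha3] at h
    linear_combination h
  -- Chain 3 : derivatives of ω at 0
  set b1 : ℂ := deriv ω 0 with hb1def
  set d2 : ℂ := deriv (deriv ω) 0 with hd2def
  have W1 : Set.EqOn (fun z => deriv p z * (1 - ω z) + p z * (-(deriv ω z)))
      (fun z => c * deriv ω z) (ball (0:ℂ) 1) := by
    intro z hz
    show deriv p z * (1 - ω z) + p z * (-(deriv ω z)) = c * deriv ω z
    have hR : deriv (fun w => 1 + c * ω w) z = c * deriv ω z := by
      rw [deriv_const_add, deriv_const_mul _ (hdω z hz)]
    rw [← hR, ← eqOn_deriv' W0 hz,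
      deriv_fun_mul (hdp z hz) ((hdω z hz).const_sub 1), deriv_const_sub]
  have W2 : Set.EqOn (fun z => (deriv (deriv p) z * (1 - ω z) + deriv p z * (-(deriv ω z))) +
      (deriv p z * (-(deriv ω z)) + p z * (-(deriv (deriv ω) z))))
      (fun z => c * deriv (deriv ω) z) (ball (0:ℂ) 1) := by
    intro z hz
    show (deriv (deriv p) z * (1 - ω z) + deriv p z * (-(deriv ω z))) +
      (deriv p z * (-(deriv ω z)) + p z * (-(deriv (deriv ω) z))) = c * deriv (deriv ω) z
    have hR : deriv (fun w => c * deriv ω w) z = c * deriv (deriv ω) z := by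
      rw [deriv_const_mul _ (hdω' z hz)]
    rw [← hR, ← eqOn_deriv' W1 hz,
      deriv_fun_add ((hdp' z hz).fun_mul ((hdω z hz).const_sub 1)) ((hdp z hz).fun_mul (hdω' z hz).fun_neg),
      deriv_fun_mul (hdp' z hz) ((hdω z hz).const_sub 1), deriv_const_sub,
      deriv_fun_mul (hdp z hz) (hdω' z hz).fun_neg, deriv.fun_neg]
  have w1 : a 2 - b1 = c * b1 := by
    have h := W1 hB
    simp only [hω0, hp0, sub_zero, mul_one, one_mul, hp'0] at h
    rw [← hb1def] at h
    linear_combination h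
  have w2 : (4 * a 3 - 2 * (a 2)^2 - a 2 * b1) + (-(a 2 * b1) - d2) = c * d2 := by
    have h := W2 hB
    simp only [hω0, hp0, sub_zero, mul_one, one_mul, hp'0, hp''0] at h
    rw [← hb1def, ← hd2def] at h
    linear_combination h
  -- Chain 4 : φ = dslope ω 0 and its derivative at 0
  set φ := dslope ω 0 with hφdef
  have hφa : AnalyticOnNhd ℂ φ (ball (0:ℂ) 1) := analyticOnNhd_dslope' hωa hω0
  have hdφ : ∀ z ∈ ball (0:ℂ) 1, DifferentiableAt ℂ φ z :=
    fun z hz => (hφa z hz).differentiableAt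
  have hdφ' : ∀ z ∈ ball (0:ℂ) 1, DifferentiableAt ℂ (deriv φ) z :=
    fun z hz => (hφa.deriv z hz).differentiableAt
  have hφ0 : φ 0 = b1 := by rw [hφdef, dslope_same, hb1def]
  have Φ0 : Set.EqOn (fun z => z * φ z) ω (ball (0:ℂ) 1) := by
    intro z _
    have h := sub_smul_dslope ω 0 z
    rw [sub_zero, hω0, sub_zero, smul_eq_mul] at h
    exact h
  have Φ1 : Set.EqOn (fun z => φ z + z * deriv φ z) (deriv ω) (ball (0:ℂ) 1) := by
    intro z hz
    rw [← eqOn_deriv' Φ0 hz]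
    rw [deriv_fun_mul differentiableAt_fun_id (hdφ z hz), deriv_id'']
    ring
  have Φ2 : Set.EqOn (fun z => 2 * deriv φ z + z * deriv (deriv φ) z)
      (deriv (deriv ω)) (ball (0:ℂ) 1) := by
    intro z hz
    rw [← eqOn_deriv' Φ1 hz]
    rw [deriv_fun_add (hdφ z hz) (differentiableAt_fun_id.fun_mul (hdφ' z hz)),
      deriv_fun_mul differentiableAt_fun_id (hdφ' z hz), deriv_id'']
    ring
  set d : ℂ := deriv φ 0 with hddef
  have hd2d : d2 = 2 * d := by
    have h := Φ2 hB
    simp only [zero_mul, add_zero] at h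
    rw [hd2def, ← h, hddef]
  -- bounds on φ
  have hφle : ∀ z ∈ ball (0:ℂ) 1, ‖φ z‖ ≤ 1 := by
    intro z hz
    have hmaps : Set.MapsTo ω (ball (0:ℂ) 1) (ball (ω 0) 1) := by
      intro w hw
      rw [hω0, mem_ball, dist_zero_right]
      exact hωlt w hw
    have := Complex.norm_dslope_le_div_of_mapsTo_ball
      (fun w hw => (hdω w hw).differentiableWithinAt) (hmaps.mono_right ball_subset_closedBall) hz
    rw [← hφdef] at this
    simpa using this
  have hb1le : ‖b1‖ ≤ 1 := by
    have := hφle 0 hB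
    rwa [hφ0] at this
  -- the Schwarz-Pick type bound |d| ≤ 1 - |b1|²
  have hdle : ‖d‖ ≤ 1 - (‖b1‖)^2 := by
    rcases lt_or_ge (‖b1‖) 1 with hb1lt | hb1ge
    · -- Möbius transform argument
      set ψ := fun z => (φ z - b1) / (1 - (starRingEnd ℂ) b1 * φ z) with hψdef
      have hvne : ∀ z ∈ ball (0:ℂ) 1, (1:ℂ) - (starRingEnd ℂ) b1 * φ z ≠ 0 := by
        intro z hz h
        have h1 : (starRingEnd ℂ) b1 * φ z = 1 := by linear_combination -h
        have h2 := congrArg (‖·‖) h1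
        rw [norm_mul, Complex.norm_conj, norm_one] at h2
        nlinarith [norm_nonneg b1, norm_nonneg (φ z), hφle z hz]
      have hψd : DifferentiableOn ℂ ψ (ball (0:ℂ) 1) := by
        intro z hz
        exact (((hφa z hz).sub analyticAt_const).div
          (analyticAt_const.sub (analyticAt_const.mul (hφa z hz)))
          (hvne z hz)).differentiableAt.differentiableWithinAt
      have hψ0 : ψ 0 = 0 := by
        rw [hψdef]
        simp [hφ0]
      have hψle : ∀ z ∈ ball (0:ℂ) 1, ‖ψ z‖ ≤ 1 :=
        fun z hz => moebius_abs_le' (hφle z hz) hb1lt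
      have hψ'le : ‖deriv ψ 0‖ ≤ 1 := deriv_le_one' hψd hψle hψ0
      have hu : DifferentiableAt ℂ (fun z => φ z - b1) 0 := (hdφ 0 hB).sub_const _
      have hv : DifferentiableAt ℂ (fun z => (1:ℂ) - (starRingEnd ℂ) b1 * φ z) 0 :=
        ((hdφ 0 hB).const_mul _).const_sub _
      have hne : (1:ℂ) - (starRingEnd ℂ) b1 * b1 ≠ 0 := by
        have h := hvne 0 hB; rwa [hφ0] at h
      have hψ' : deriv ψ 0 = d / (1 - (starRingEnd ℂ) b1 * b1) := by
        rw [hψdef, deriv_fun_div hu hv (hvne 0 hB), deriv_sub_const, deriv_const_sub,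
          deriv_const_mul _ (hdφ 0 hB), hφ0, ← hddef]
        field_simp [hne]
        ring
      have hvval : ‖(1:ℂ) - (starRingEnd ℂ) b1 * b1‖ = 1 - (‖b1‖)^2 := by
        have h1 : (starRingEnd ℂ) b1 * b1 = ((Complex.normSq b1 : ℝ) : ℂ) := by
          rw [mul_comm, Complex.mul_conj]
        have h3 : Complex.normSq b1 = (‖b1‖)^2 := (Complex.sq_norm b1).symm
        rw [h1, show (1:ℂ) - ((Complex.normSq b1 : ℝ) : ℂ) = (((1 - Complex.normSq b1 : ℝ)) : ℂ) by
          push_cast; ring, Complex.norm_real, Real.norm_eq_abs, h3,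
          _root_.abs_of_nonneg (by nlinarith [norm_nonneg b1])]
      rw [hψ', norm_div, hvval,
        div_le_one (by nlinarith [norm_nonneg b1])] at hψ'le
      linarith [hψ'le]
    · -- |b1| = 1 : local max, so φ is locally constant, d = 0
      have hb1eq : ‖b1‖ = 1 := le_antisymm hb1le hb1ge
      have hloc : ∀ᶠ y in 𝓝 (0:ℂ), φ y = φ 0 := by
        apply Complex.eventually_eq_of_isLocalMax_norm
        · filter_upwards [isOpen_ball.mem_nhds hB] with z hz using hdφ z hz
        · filter_upwards [isOpen_ball.mem_nhds hB] with z hz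
          show ‖φ z‖ ≤ ‖φ 0‖
          rw [hφ0]
          simpa [hb1eq] using hφle z hz
      have hd0 : d = 0 := by
        rw [hddef,
          (Filter.EventuallyEq.deriv_eq hloc : deriv φ 0 = deriv (fun _ : ℂ => φ 0) 0),
          deriv_const]
      rw [hd0, norm_zero, hb1eq]
      norm_num
  -- assemble the identity J₂ = (1-α)(c b1² - d)
  have key : (a 2)^2 - a 3 = ((1 + c)/2) * (c * b1^2 - d) := by
    have w2' : 4 * a 3 = 2 * (a 2)^2 + 2 * (a 2) * b1 + (2 + 2*c) * d := by
      rw [hd2d] at w2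
      linear_combination w2
    have w1' : a 2 = (1 + c) * b1 := by linear_combination w1
    linear_combination (-(1:ℂ)/4) * w2' + (a 2/2 + (1 + c) * b1/2 - b1/2) * w1'
  have hc1 : (1 + c)/2 = ((1 - α : ℝ) : ℂ) := by
    rw [hcdef]; push_cast; ring
  rw [key, hc1, norm_mul, Complex.norm_real, Real.norm_eq_abs, _root_.abs_of_nonneg (by linarith : (0:ℝ) ≤ 1 - α)]
  have habsc : ‖c‖ ≤ 1 := by
    have : c = (((1 - 2*α : ℝ)) : ℂ) := by rw [hcdef]; push_cast; ring
    rw [this, Complex.norm_real, Real.norm_eq_abs]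
    rw [abs_le]
    constructor <;> linarith
  have hbound : ‖c * b1^2 - d‖ ≤ 1 := by
    have h1 : ‖c * b1^2 - d‖ ≤ ‖c * b1^2‖ + ‖d‖ := by
      have := norm_add_le (c * b1^2) (-d)
      simpa [sub_eq_add_neg] using this
    have h2 : ‖c * b1^2‖ = ‖c‖ * (‖b1‖)^2 := by
      rw [norm_mul, norm_pow]
    nlinarith [norm_nonneg b1, norm_nonneg c, sq_nonneg (‖b1‖),
      norm_nonneg (c * b1^2 - d)]
  nlinarith [norm_nonneg (c * b1^2 - d)]
end

section
/- Let -1/2 ≤ α < 1 and let h be analytic on the unit disk with h(0) = 0, h'(0) = 1, h'(z) ≠ 0 for all z in the disk, and Re(1 + z h''(z)/h'(z)) > α for all z in the disk, with Taylor expansion h(z) = z + Σ_{k≥2} b_k z^k. Then the Zalcman functional J_2(h) = b_2² - b_3 satisfies |J_2(h)| ≤ (1/3)(1-α). -/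
open Complex Metric


lemma mobius_norm_le {a w : ℂ} (ha : ‖a‖ ≤ 1) (hw : ‖w‖ ≤ 1) :
    ‖w - a‖ ≤ ‖1 - (starRingEnd ℂ) a * w‖ := by
  have key : Complex.normSq (1 - (starRingEnd ℂ) a * w) - Complex.normSq (w - a)
      = (1 - Complex.normSq a) * (1 - Complex.normSq w) := by
    simp only [Complex.normSq_apply, Complex.sub_re, Complex.sub_im, Complex.mul_re,
      Complex.mul_im, Complex.one_re, Complex.one_im, Complex.conj_re, Complex.conj_im]
    ring
  have hna : Complex.normSq a ≤ 1 := by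
    rw [Complex.normSq_eq_norm_sq]
    nlinarith [norm_nonneg a]
  have hnw : Complex.normSq w ≤ 1 := by
    rw [Complex.normSq_eq_norm_sq]
    nlinarith [norm_nonneg w]
  have h2 : Complex.normSq (w - a) ≤ Complex.normSq (1 - (starRingEnd ℂ) a * w) := by
    nlinarith [key]
  rw [Complex.norm_def, Complex.norm_def]
  exact Real.sqrt_le_sqrt h2



lemma schwarz_pick_zero {g : ℂ → ℂ} (hd : DifferentiableOn ℂ g (ball 0 1))
    (hbd : ∀ z ∈ ball (0:ℂ) 1, ‖g z‖ ≤ 1) : ‖deriv g 0‖ ≤ 1 - ‖g 0‖ ^ 2 := by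
  have h0 : (0:ℂ) ∈ ball (0:ℂ) 1 := mem_ball_self one_pos
  have ha : ‖g 0‖ ≤ 1 := hbd 0 h0
  rcases eq_or_lt_of_le ha with heq | hlt
  · -- boundary case: g constant by maximum modulus
    have hmax : IsMaxOn (norm ∘ g) (ball 0 1) 0 := by
      intro z hz
      simpa [heq] using hbd z hz
    have hEq := Complex.eqOn_of_isPreconnected_of_isMaxOn_norm
      (convex_ball (0:ℂ) 1).isPreconnected isOpen_ball hd h0 hmax
    have hfe : g =ᶠ[nhds (0:ℂ)] fun _ => g 0 := by
      filter_upwards [isOpen_ball.mem_nhds h0] with z hz using hEq hz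
    have : deriv g 0 = 0 := by
      rw [hfe.deriv_eq]; simp
    rw [this, norm_zero, heq]
    norm_num
  · set a := g 0 with haa
    have hden : ∀ w : ℂ, ‖w‖ ≤ 1 → (1 : ℂ) - (starRingEnd ℂ) a * w ≠ 0 := by
      intro w hw hzero
      have h1 : (1:ℂ) = (starRingEnd ℂ) a * w := by linear_combination hzero
      have h2 : ‖a‖ * ‖w‖ = 1 := by
        have h3 := congrArg (fun z : ℂ => ‖z‖) h1
        simpa [norm_mul] using h3.symm
      nlinarith [norm_nonneg a, norm_nonneg w]
    set F : ℂ → ℂ := fun z => (g z - a) / (1 - (starRingEnd ℂ) a * g z) with hF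
    have hFb : ∀ z ∈ ball (0:ℂ) 1, ‖F z‖ ≤ 1 := by
      intro z hz
      rw [hF]
      simp only
      rw [norm_div]
      apply div_le_one_of_le₀ (mobius_norm_le ha (hbd z hz)) (norm_nonneg _)
    have hFd : DifferentiableOn ℂ F (ball 0 1) := by
      intro z hz
      exact ((hd z hz).sub (differentiableWithinAt_const a)).div
        ((differentiableWithinAt_const 1).sub ((differentiableWithinAt_const _).mul (hd z hz)))
        (hden (g z) (hbd z hz))
    have hF0 : F 0 = 0 := by simp [hF, haa]
    have hF1 : ∀ R : ℝ, 1 < R → ‖deriv F 0‖ ≤ R := by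
      intro R hR
      have hmap : Set.MapsTo F (ball 0 1) (ball (F 0) R) := by
        intro z hz
        rw [hF0, mem_ball_zero_iff]
        exact lt_of_le_of_lt (hFb z hz) hR
      simpa using Complex.norm_deriv_le_div_of_mapsTo_ball hFd (hmap.mono_right ball_subset_closedBall) one_pos
    have hF1' : ‖deriv F 0‖ ≤ 1 := by
      by_contra hcon
      push_neg at hcon
      have := hF1 ((1 + ‖deriv F 0‖) / 2) (by linarith)
      linarith
    -- compute deriv F 0
    have hga : DifferentiableAt ℂ g 0 := (hd 0 h0).differentiableAt (isOpen_ball.mem_nhds h0)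
    have hg' : HasDerivAt g (deriv g 0) 0 := hga.hasDerivAt
    have hnum : HasDerivAt (fun z => g z - a) (deriv g 0) 0 := hg'.sub_const a
    have hdenom : HasDerivAt (fun z => (1:ℂ) - (starRingEnd ℂ) a * g z)
        (0 - (starRingEnd ℂ) a * deriv g 0) 0 := (hasDerivAt_const _ _).sub (hg'.const_mul _)
    have hdne : (1:ℂ) - (starRingEnd ℂ) a * g 0 ≠ 0 := hden a ha
    have hFder : HasDerivAt F
        ((deriv g 0 * ((1:ℂ) - (starRingEnd ℂ) a * g 0) - (g 0 - a) * (0 - (starRingEnd ℂ) a * deriv g 0))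
          / ((1:ℂ) - (starRingEnd ℂ) a * g 0) ^ 2) 0 := hnum.div hdenom hdne
    have hval : deriv F 0 = deriv g 0 / ((1:ℂ) - (starRingEnd ℂ) a * a) := by
      rw [hFder.deriv, ← haa]
      have : g 0 - a = 0 := by rw [← haa]; ring
      rw [← haa] at *
      field_simp
      ring
    have hsq : (starRingEnd ℂ) a * a = (Complex.normSq a : ℂ) := by
      rw [mul_comm, Complex.mul_conj]
    have hns : Complex.normSq a = ‖a‖ ^ 2 := by
      rw [Complex.normSq_eq_norm_sq]
    have h1a : ‖a‖ ^ 2 < 1 := by nlinarith [norm_nonneg a]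
    have hne' : (1 : ℝ) - ‖a‖ ^ 2 ≠ 0 := by nlinarith
    have hnorm : ‖(1:ℂ) - (starRingEnd ℂ) a * a‖ = 1 - ‖a‖ ^ 2 := by
      rw [hsq, hns]
      rw [show (1:ℂ) - ((‖a‖ ^ 2 : ℝ) : ℂ) = (((1 - ‖a‖ ^ 2 : ℝ)) : ℂ) by push_cast; ring]
      rw [Complex.norm_real, Real.norm_of_nonneg (by nlinarith [h1a])]
    have hkey : ‖deriv g 0‖ = ‖deriv F 0‖ * (1 - ‖a‖ ^ 2) := by
      rw [hval, norm_div, hnorm, div_mul_cancel₀ _ hne']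
    rw [hkey]
    nlinarith [norm_nonneg (deriv F 0), hF1', h1a]


lemma zalcman_final_calc (α : ℝ) (hα0 : -(1 / 2) ≤ α) (hα1 : α < 1) (X Y : ℂ)
    (H : ‖(Y * ((2 - 2*α : ℝ) : ℂ) - (1 + ((2 - 2*α : ℝ) : ℂ)) * X ^ 2) / ((2 - 2*α : ℝ) : ℂ) ^ 2‖
      ≤ 1 - ‖X / ((2 - 2*α : ℝ) : ℂ)‖ ^ 2) :
    ‖(X / 2) ^ 2 - Y / 6‖ ≤ 1 / 3 * (1 - α) := by
  set c : ℂ := ((2 - 2*α : ℝ) : ℂ) with hc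
  have htc : ((1 - α : ℝ) : ℂ) ≠ 0 := Complex.ofReal_ne_zero.2 (by linarith)
  have hcc : c = 2 * ((1 - α : ℝ) : ℂ) := by rw [hc]; push_cast; ring
  have hcne : c ≠ 0 := by rw [hcc]; exact mul_ne_zero two_ne_zero htc
  set A : ℂ := (Y * c - (1 + c) * X ^ 2) / c ^ 2 with hA
  have hid : (X / 2) ^ 2 - Y / 6
      = ((-(1 - α) / 3 : ℝ) : ℂ) * (A + ((α : ℝ) : ℂ) * (X / c) ^ 2) := by
    have htc2 : (1 : ℂ) - (α : ℂ) ≠ 0 := by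
      intro hzz
      apply htc
      push_cast
      linear_combination hzz
    rw [hA, hcc]
    push_cast
    field_simp [htc2]
    ring
  have hbound : ‖A + ((α : ℝ) : ℂ) * (X / c) ^ 2‖ ≤ ‖A‖ + |α| * ‖X / c‖ ^ 2 := by
    calc ‖A + ((α : ℝ) : ℂ) * (X / c) ^ 2‖ ≤ ‖A‖ + ‖((α : ℝ) : ℂ) * (X / c) ^ 2‖ :=
      norm_add_le _ _
    _ = ‖A‖ + |α| * ‖X / c‖ ^ 2 := by
      rw [norm_mul, norm_pow, Complex.norm_real, Real.norm_eq_abs]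
  have h1t : |α| ≤ 1 := by rw [abs_le]; constructor <;> linarith
  have hsq : (0:ℝ) ≤ ‖X / c‖ ^ 2 := sq_nonneg _
  have hnn : ‖(X / 2) ^ 2 - Y / 6‖ = (1 - α) / 3 * ‖A + ((α : ℝ) : ℂ) * (X / c) ^ 2‖ := by
    rw [hid, norm_mul, Complex.norm_real, Real.norm_eq_abs]
    rw [abs_of_nonpos (by linarith : -(1 - α)/3 ≤ 0)]
    ring_nf
  rw [hnn, show (1:ℝ)/3 * (1 - α) = (1 - α)/3 * 1 by ring]
  apply mul_le_mul_of_nonneg_left _ (by linarith : (0:ℝ) ≤ (1 - α)/3)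
  calc ‖A + ((α : ℝ) : ℂ) * (X / c) ^ 2‖ ≤ ‖A‖ + |α| * ‖X / c‖ ^ 2 := hbound
  _ ≤ 1 := by nlinarith [H]



/-- For `-1/2 ≤ α < 1` and `h ∈ K(α)` on the unit disk, the Zalcman functional
`J₂(h) = b₂² - b₃` satisfies `|J₂(h)| ≤ (1/3)(1-α)`. -/
theorem zalcman_J2_convex_order_alpha (α : ℝ) (hα0 : -(1 / 2) ≤ α) (hα1 : α < 1)
    (h : ℂ → ℂ) (hh : AnalyticOn ℂ h (ball 0 1))
    (hh0 : h 0 = 0) (hh1 : deriv h 0 = 1)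
    (hhne : ∀ z ∈ ball (0 : ℂ) 1, deriv h z ≠ 0)
    (hcv : ∀ z ∈ ball (0 : ℂ) 1, α < (1 + z * deriv (deriv h) z / deriv h z).re)
    (b : ℕ → ℂ) (hb : ∀ k, b k = iteratedDeriv k h 0 / (Nat.factorial k : ℂ)) :
    ‖(b 2) ^ 2 - b 3‖ ≤ (1 / 3) * (1 - α) := by
  have h0mem : (0:ℂ) ∈ ball (0:ℂ) 1 := mem_ball_self one_pos
  have hnhd : AnalyticOnNhd ℂ h (ball 0 1) := (isOpen_ball.analyticOn_iff_analyticOnNhd).1 hh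
  have ha1 : AnalyticOnNhd ℂ (deriv h) (ball 0 1) := hnhd.deriv
  have ha2 : AnalyticOnNhd ℂ (deriv (deriv h)) (ball 0 1) := ha1.deriv
  have hd1 : DifferentiableOn ℂ (deriv h) (ball 0 1) := ha1.differentiableOn
  have hd2 : DifferentiableOn ℂ (deriv (deriv h)) (ball 0 1) := ha2.differentiableOn
  set c : ℂ := ((2 - 2*α : ℝ) : ℂ) with hc
  have hcne : c ≠ 0 := Complex.ofReal_ne_zero.2 (by linarith)
  set D : ℂ → ℂ := fun z => z * deriv (deriv h) z + c * deriv h z with hD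
  -- key inequality ‖z h''‖ < ‖D z‖
  have key : ∀ z ∈ ball (0:ℂ) 1, ‖z * deriv (deriv h) z‖ < ‖D z‖ := by
    intro z hz
    have hne := hhne z hz
    have hu := hcv z hz
    set u : ℂ := z * deriv (deriv h) z / deriv h z with huu
    have hNz : z * deriv (deriv h) z = deriv h z * u := by
      rw [huu]; field_simp
    have hDz : D z = deriv h z * (u + c) := by
      rw [hD]; simp only; rw [hNz]; ring
    have hure : α - 1 < u.re := by
      have h1re : (1 + u).re = 1 + u.re := by simp
      rw [h1re] at hu
      linarith
    have h1n : ‖u‖ < ‖u + c‖ := by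
      have hsq : ‖u + c‖ ^ 2 - ‖u‖ ^ 2 = (2 - 2*α) ^ 2 + 2 * (2 - 2*α) * u.re := by
        have e1 : ‖u + c‖ ^ 2 = Complex.normSq (u + c) := by
          rw [Complex.sq_norm]
        have e2 : ‖u‖ ^ 2 = Complex.normSq u := by
          rw [Complex.sq_norm]
        rw [e1, e2, hc]
        simp only [Complex.normSq_apply, Complex.add_re, Complex.add_im, Complex.ofReal_re,
          Complex.ofReal_im, add_zero]
        ring
      nlinarith [norm_nonneg u, norm_nonneg (u + c), hure, hα1]
    calc ‖z * deriv (deriv h) z‖ = ‖deriv h z‖ * ‖u‖ := by rw [hNz, norm_mul]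
    _ < ‖deriv h z‖ * ‖u + c‖ := by
        exact mul_lt_mul_of_pos_left h1n (norm_pos_iff.2 hne)
    _ = ‖D z‖ := by rw [hDz, norm_mul]
  have hDne : ∀ z ∈ ball (0:ℂ) 1, D z ≠ 0 := by
    intro z hz hzero
    have := key z hz
    rw [hzero, norm_zero] at this
    exact (norm_nonneg _).not_gt this
  set ω : ℂ → ℂ := fun z => (z * deriv (deriv h) z) / D z with hω
  have hωb : ∀ z ∈ ball (0:ℂ) 1, ‖ω z‖ < 1 := by
    intro z hz
    rw [hω]
    simp only [norm_div]
    rw [div_lt_one (lt_of_le_of_lt (norm_nonneg _) (key z hz))]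
    exact key z hz
  have hω0 : ω 0 = 0 := by rw [hω]; simp
  have hωd : DifferentiableOn ℂ ω (ball 0 1) := by
    intro z hz
    exact (differentiableWithinAt_id.mul (hd2 z hz)).div
      ((differentiableWithinAt_id.mul (hd2 z hz)).add
        ((differentiableWithinAt_const c).mul (hd1 z hz))) (hDne z hz)
  have h10 : deriv h 0 = 1 := hh1
  have hD0 : D 0 = c := by rw [hD]; simp [h10]
  set X : ℂ := deriv (deriv h) 0 with hX
  set Y : ℂ := deriv (deriv (deriv h)) 0 with hY
  have hd2at : DifferentiableAt ℂ (deriv (deriv h)) 0 := (ha2 0 h0mem).differentiableAt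
  have hd1at : DifferentiableAt ℂ (deriv h) 0 := (ha1 0 h0mem).differentiableAt
  have hNder : HasDerivAt (fun z : ℂ => z * deriv (deriv h) z) (1 * X + 0 * Y) 0 := by
    exact (hasDerivAt_id' (0:ℂ)).mul hd2at.hasDerivAt
  have hDder : HasDerivAt D ((1 * X + 0 * Y) + c * X) 0 := by
    exact hNder.add ((hd1at.hasDerivAt).const_mul c)
  have hDne0 : D 0 ≠ 0 := hDne 0 h0mem
  have hωder : HasDerivAt ω (((1 * X + 0 * Y) * D 0 - (0 * X) * ((1 * X + 0 * Y) + c * X)) / D 0 ^ 2) 0 := by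
    exact hNder.div hDder hDne0
  have hω'0 : deriv ω 0 = X / c := by
    rw [hωder.deriv, hD0]
    field_simp
    ring
  set g : ℂ → ℂ := fun z => deriv (deriv h) z / D z with hg
  have hEq : Set.EqOn (dslope ω 0) g (ball 0 1) := by
    intro z hz
    rcases eq_or_ne z 0 with rfl | hz0
    · rw [dslope_same, hω'0, hg]
      simp only
      rw [hD0]
    · have hDz' : z * deriv (deriv h) z + c * deriv h z ≠ 0 := hDne z hz
      rw [dslope_of_ne _ hz0, slope_def_field, hω0, hω, hg]
      simp only
      rw [sub_zero, sub_zero, div_div, mul_comm _ z]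
      exact mul_div_mul_left _ _ hz0
  have hmap : Set.MapsTo ω (ball 0 1) (ball (ω 0) 1) := by
    intro z hz
    rw [hω0, mem_ball_zero_iff]
    exact hωb z hz
  have hgb : ∀ z ∈ ball (0:ℂ) 1, ‖g z‖ ≤ 1 := by
    intro z hz
    have hsl := Complex.norm_dslope_le_div_of_mapsTo_ball hωd (hmap.mono_right ball_subset_closedBall) hz
    rw [hEq hz] at hsl
    simpa using hsl
  have hgd : DifferentiableOn ℂ g (ball 0 1) := by
    intro z hz
    exact (hd2 z hz).div
      ((differentiableWithinAt_id.mul (hd2 z hz)).add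
        ((differentiableWithinAt_const c).mul (hd1 z hz))) (hDne z hz)
  have hpick := schwarz_pick_zero hgd hgb
  have hg0 : g 0 = X / c := by rw [hg]; simp only; rw [hD0]
  have hgder : HasDerivAt g ((Y * D 0 - X * ((1 * X + 0 * Y) + c * X)) / D 0 ^ 2) 0 :=
    hd2at.hasDerivAt.div hDder hDne0
  have hg'0 : deriv g 0 = (Y * c - (1 + c) * X ^ 2) / c ^ 2 := by
    rw [hgder.deriv, hD0]
    ring_nf
  rw [hg'0, hg0] at hpick
  have hfinal := zalcman_final_calc α hα0 hα1 X Y (by rw [← hc]; exact hpick)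
  -- identify b 2, b 3
  have hb2 : b 2 = X / 2 := by
    rw [hb 2, hX, show (2:ℕ) = 1 + 1 from rfl, iteratedDeriv_succ, iteratedDeriv_one]
    norm_num [Nat.factorial]
  have hb3 : b 3 = Y / 6 := by
    rw [hb 3, hY, show (3:ℕ) = 1 + 1 + 1 from rfl, iteratedDeriv_succ, iteratedDeriv_succ,
      iteratedDeriv_one]
    norm_num [Nat.factorial]
  rw [hb2, hb3]
  exact hfinal
end
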